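/- Let a, b be points of the open unit ball 𝔹ⁿ ⊂ ℝⁿ and define the Hilbert distance h(a,b) := 2·arcosh((1 − ⟨a,b⟩)/√((1−‖a‖²)(1−‖b‖²))). Then tanh(h(a,b)/4) ≥ ‖a−b‖/√(4 − ‖a+b‖²), with equality when a = −b. -/

import Mathlib

/-!
Put `u = 1 - ⟪a, b⟫`, `α = 1 - ‖a‖²`, `β = 1 - ‖b‖²`. The half-angle formula
`tanh² (x / 2) = (cosh x - 1) / (cosh x + 1)` gives `tanh (h / 4) = √((u - √(αβ)) / (u + √(αβ)))`,
while `‖a - b‖² = 2u - (α + β)` and `4 - ‖a + b‖² = 2u + (α + β)` give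
`‖a - b‖ / √(4 - ‖a + b‖²) = √((u - (α + β) / 2) / (u + (α + β) / 2))`.
Since `t ↦ (u - t) / (u + t)` is decreasing, the inequality is AM-GM `√(αβ) ≤ (α + β) / 2`,
which is an equality when `‖a‖ = ‖b‖`, in particular when `a = -b`.
-/

/-- The inverse hyperbolic cosine on the reals. -/
noncomputable def arcosh (x : ℝ) : ℝ := Real.log (x + Real.sqrt (x^2 - 1))

/-- The Hilbert distance of the unit ball `𝔹ⁿ`:
`h(a,b) = 2·arcosh((1−⟨a,b⟩)/√((1−‖a‖²)(1−‖b‖²)))`. -/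
noncomputable def hilbertDist {n : ℕ} (a b : EuclideanSpace ℝ (Fin n)) : ℝ :=
  2 * arcosh ((1 - (inner ℝ a b : ℝ)) / Real.sqrt ((1 - ‖a‖^2) * (1 - ‖b‖^2)))

theorem Real.tanh_half_eq_sqrt {y : ℝ} (hy : 0 ≤ y) :
    Real.tanh (y / 2) = √((Real.cosh y - 1) / (Real.cosh y + 1)) := by
  have hcosh : Real.cosh y = Real.cosh (y / 2) ^ 2 + Real.sinh (y / 2) ^ 2 := by
    rw [← Real.cosh_two_mul]; ring_nf
  have htanh_nonneg : 0 ≤ Real.tanh (y / 2) := by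
    rw [Real.tanh_eq_sinh_div_cosh]
    exact div_nonneg (Real.sinh_nonneg_iff.mpr (by linarith)) (Real.cosh_pos _).le
  rw [← Real.sqrt_sq htanh_nonneg, Real.tanh_eq_sinh_div_cosh, hcosh, div_pow, Real.cosh_sq]
  congr 1
  field_simp
  ring

theorem Real.sqrt_mul_le_add_div_two {x y : ℝ} (hx : 0 ≤ x) (hy : 0 ≤ y) :
    √(x * y) ≤ (x + y) / 2 :=
  Real.sqrt_le_iff.mpr ⟨by positivity, by nlinarith [sq_nonneg (x - y)]⟩

theorem sub_div_add_le_sub_div_add {u s t : ℝ} (hu : 0 ≤ u) (hus : 0 < u + s) (hst : s ≤ t) :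
    (u - t) / (u + t) ≤ (u - s) / (u + s) := by
  rw [div_le_div_iff₀ (by linarith) hus]
  nlinarith [mul_nonneg hu (sub_nonneg.mpr hst)]

section InnerProductSpace

variable {E : Type*} [NormedAddCommGroup E] [InnerProductSpace ℝ E]

theorem real_inner_le_norm_sq_add_norm_sq_div_two (a b : E) :
    inner ℝ a b ≤ (‖a‖ ^ 2 + ‖b‖ ^ 2) / 2 := by
  nlinarith [norm_sub_sq_real a b, sq_nonneg ‖a - b‖]

theorem sqrt_one_sub_sq_mul_le_one_sub_inner {a b : E} (ha : ‖a‖ ≤ 1) (hb : ‖b‖ ≤ 1) :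
    √((1 - ‖a‖ ^ 2) * (1 - ‖b‖ ^ 2)) ≤ 1 - inner ℝ a b := by
  calc √((1 - ‖a‖ ^ 2) * (1 - ‖b‖ ^ 2)) ≤ ((1 - ‖a‖ ^ 2) + (1 - ‖b‖ ^ 2)) / 2 :=
        Real.sqrt_mul_le_add_div_two (sub_nonneg.mpr (pow_le_one₀ (norm_nonneg a) ha))
          (sub_nonneg.mpr (pow_le_one₀ (norm_nonneg b) hb))
    _ ≤ 1 - inner ℝ a b := by linarith [real_inner_le_norm_sq_add_norm_sq_div_two a b]

theorem norm_sub_div_sqrt_four_sub_norm_add_sq (a b : E) :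
    ‖a - b‖ / √(4 - ‖a + b‖ ^ 2) =
      √((1 - inner ℝ a b - ((1 - ‖a‖ ^ 2) + (1 - ‖b‖ ^ 2)) / 2) /
        (1 - inner ℝ a b + ((1 - ‖a‖ ^ 2) + (1 - ‖b‖ ^ 2)) / 2)) := by
  rw [← Real.sqrt_sq (norm_nonneg (a - b)), ← Real.sqrt_div (sq_nonneg _), norm_sub_sq_real,
    norm_add_sq_real]
  congr 1
  rw [← div_div_div_cancel_right₀ (two_ne_zero' ℝ)]
  ring_nf

end InnerProductSpace

theorem tanh_hilbertDist_div_four {n : ℕ} {a b : EuclideanSpace ℝ (Fin n)} (ha : ‖a‖ < 1)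
    (hb : ‖b‖ < 1) :
    Real.tanh (hilbertDist a b / 4) =
      √((1 - inner ℝ a b - √((1 - ‖a‖ ^ 2) * (1 - ‖b‖ ^ 2))) /
        (1 - inner ℝ a b + √((1 - ‖a‖ ^ 2) * (1 - ‖b‖ ^ 2)))) := by
  set D := √((1 - ‖a‖ ^ 2) * (1 - ‖b‖ ^ 2))
  have hD : 0 < D := Real.sqrt_pos.mpr <| mul_pos
    (sub_pos.mpr (pow_lt_one₀ (norm_nonneg a) ha two_ne_zero))
    (sub_pos.mpr (pow_lt_one₀ (norm_nonneg b) hb two_ne_zero))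
  have hX : 1 ≤ (1 - inner ℝ a b) / D :=
    (one_le_div hD).mpr (sqrt_one_sub_sq_mul_le_one_sub_inner ha.le hb.le)
  have hh : hilbertDist a b / 4 = Real.arcosh ((1 - inner ℝ a b) / D) / 2 := by
    rw [hilbertDist, arcosh, Real.arcosh]; ring
  rw [hh, Real.tanh_half_eq_sqrt (Real.arcosh_nonneg hX), Real.cosh_arcosh hX]
  congr 1
  field_simp

/-- Corollary 3.6: `tanh(h(a,b)/4) ≥ ‖a−b‖/√(4−‖a+b‖²)` for `a, b` in the unit ball,
with equality when `a = −b`. -/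
theorem stmt_8 (n : ℕ) (a b : EuclideanSpace ℝ (Fin n)) (ha : ‖a‖ < 1) (hb : ‖b‖ < 1) :
    ‖a - b‖ / Real.sqrt (4 - ‖a + b‖^2) ≤ Real.tanh (hilbertDist a b / 4) ∧
      (a = -b → Real.tanh (hilbertDist a b / 4) = ‖a - b‖ / Real.sqrt (4 - ‖a + b‖^2)) := by
  have hα : 0 < 1 - ‖a‖ ^ 2 := sub_pos.mpr (pow_lt_one₀ (norm_nonneg a) ha two_ne_zero)
  have hβ : 0 < 1 - ‖b‖ ^ 2 := sub_pos.mpr (pow_lt_one₀ (norm_nonneg b) hb two_ne_zero)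
  have hD : 0 < √((1 - ‖a‖ ^ 2) * (1 - ‖b‖ ^ 2)) := Real.sqrt_pos.mpr (mul_pos hα hβ)
  have hDu := sqrt_one_sub_sq_mul_le_one_sub_inner ha.le hb.le
  rw [tanh_hilbertDist_div_four ha hb, norm_sub_div_sqrt_four_sub_norm_add_sq]
  constructor
  · exact Real.sqrt_le_sqrt <| sub_div_add_le_sub_div_add (by linarith) (by linarith)
      (Real.sqrt_mul_le_add_div_two hα.le hβ.le)
  · rintro rfl
    rw [norm_neg, Real.sqrt_mul_self hβ.le, add_self_div_two]
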